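/- Let (A,C,ψ) be an entwining structure and let τ_n: I^n(A,C,ψ) → I^n(A,C,ψ) be the cyclic operator (τ_n g)(c ⊗ a₁ ⊗ ... ⊗ a_{n+1}) = (-1)^n g(c^ψ ⊗ a₂ ⊗ ... ⊗ a_{n+1} ⊗ a_{1ψ}), where I^n(A,C,ψ) is the invariant subspace of maps g: C ⊗ A^{⊗(n+1)} → k satisfying g(c ⊗ a₁ ⊗ ... ⊗ a_{n+1}) = g(c^{ψ^{n+1}} ⊗ a_{1ψ} ⊗ ... ⊗ a_{n+1ψ}). Then τ_n^{n+1} = id on I^n(A,C,ψ). -/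
import Mathlib


open TensorProduct

/-- An entwining structure `(A, C, ψ)` over a field `k`: a unital `k`-algebra `A`,
a counital `k`-coalgebra `C` and a `k`-linear map `ψ : C ⊗ A → A ⊗ C` satisfying the
entwining axioms of Brzeziński–Majid. -/
structure Entwining (k A C : Type) [Field k] [Ring A] [Algebra k A]
    [AddCommGroup C] [Module k C] [Coalgebra k C] : Type where
  ψ : C ⊗[k] A →ₗ[k] A ⊗[k] C
  mul_compat : ψ ∘ₗ TensorProduct.map (LinearMap.id : C →ₗ[k] C) (LinearMap.mul' k A) =
    TensorProduct.map (LinearMap.mul' k A) (LinearMap.id : C →ₗ[k] C)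
      ∘ₗ (TensorProduct.assoc k A A C).symm.toLinearMap
      ∘ₗ TensorProduct.map (LinearMap.id : A →ₗ[k] A) ψ
      ∘ₗ (TensorProduct.assoc k A C A).toLinearMap
      ∘ₗ TensorProduct.map ψ (LinearMap.id : A →ₗ[k] A)
      ∘ₗ (TensorProduct.assoc k C A A).symm.toLinearMap
  comul_compat : TensorProduct.map (LinearMap.id : A →ₗ[k] A)
        (CoalgebraStruct.comul (R := k) (A := C)) ∘ₗ ψ =
    (TensorProduct.assoc k A C C).toLinearMap
      ∘ₗ TensorProduct.map ψ (LinearMap.id : C →ₗ[k] C)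
      ∘ₗ (TensorProduct.assoc k C A C).symm.toLinearMap
      ∘ₗ TensorProduct.map (LinearMap.id : C →ₗ[k] C) ψ
      ∘ₗ (TensorProduct.assoc k C C A).toLinearMap
      ∘ₗ TensorProduct.map (CoalgebraStruct.comul (R := k) (A := C)) (LinearMap.id : A →ₗ[k] A)
  counit_compat : (TensorProduct.rid k A).toLinearMap
      ∘ₗ TensorProduct.map (LinearMap.id : A →ₗ[k] A)
        (CoalgebraStruct.counit (R := k) (A := C)) ∘ₗ ψ =
    (TensorProduct.lid k A).toLinearMap
      ∘ₗ TensorProduct.map (CoalgebraStruct.counit (R := k) (A := C)) (LinearMap.id : A →ₗ[k] A)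
  unit_compat : ∀ c : C, ψ (c ⊗ₜ[k] (1 : A)) = (1 : A) ⊗ₜ[k] c

variable {k A C : Type}

/-- `IterRep e m c v ι γ β` says that `Σ_{s : ι} (β s) ⊗ (γ s)` is a representation of
the `m`-fold iterated entwining `c^{ψ^m} ⊗ v_{1ψ} ⊗ ⋯ ⊗ v_{mψ}`, obtained by applying
`ψ` successively: first to `(c, v 0)`, then to the resulting coalgebra elements and
`v 1`, and so on. -/
inductive IterRep [Field k] [Ring A] [Algebra k A] [AddCommGroup C] [Module k C]
    [Coalgebra k C] (e : Entwining k A C) :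
    (m : ℕ) → C → (Fin m → A) → (ι : Type) → (ι → C) → (ι → (Fin m → A)) → Prop
  | zero (c : C) :
      IterRep e 0 c Fin.elim0 PUnit (fun _ => c) (fun _ => Fin.elim0)
  | succ {m : ℕ} (c : C) (v : Fin (m + 1) → A) (ι₀ : Type) [Fintype ι₀]
      (α : ι₀ → A) (γ₀ : ι₀ → C)
      (h : e.ψ (c ⊗ₜ[k] v 0) = ∑ i, α i ⊗ₜ[k] γ₀ i)
      (κ : ι₀ → Type) (γ : (i : ι₀) → κ i → C) (β : (i : ι₀) → κ i → (Fin m → A))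
      (hs : ∀ i : ι₀, IterRep e m (γ₀ i) (fun j => v j.succ) (κ i) (γ i) (β i)) :
      IterRep e (m + 1) c v ((i : ι₀) × κ i) (fun p => γ p.1 p.2)
        (fun p => Fin.cons (α p.1) (β p.1 p.2))

/-- `g ∈ ℐ^{m-1}(A,C,ψ)`: the functional `g : C ⊗ A^{⊗m} → k` is invariant, i.e.
`g(c ⊗ a₁ ⊗ ⋯ ⊗ a_m) = g(c^{ψ^m} ⊗ a_{1ψ} ⊗ ⋯ ⊗ a_{mψ})`, stated via arbitrary
representations of the iterated entwining. -/
def EntwInvariant [Field k] [Ring A] [Algebra k A] [AddCommGroup C] [Module k C]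
    [Coalgebra k C] (e : Entwining k A C) {m : ℕ}
    (g : C →ₗ[k] MultilinearMap k (fun _ : Fin m => A) k) : Prop :=
  ∀ (c : C) (v : Fin m → A) (ι : Type) [Fintype ι] (γ : ι → C) (β : ι → (Fin m → A)),
    IterRep e m c v ι γ β → g c v = ∑ s, g (γ s) (β s)

/-- `TauRel e g tg` says that `tg = τ_m g` is the cyclic operator applied to `g`:
`(τ_m g)(c ⊗ a₁ ⊗ ⋯ ⊗ a_{m+1}) = (-1)^m g(c^ψ ⊗ a₂ ⊗ ⋯ ⊗ a_{m+1} ⊗ a_{1ψ})`, stated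
via arbitrary representations `ψ(c ⊗ a₁) = Σ αᵢ ⊗ γᵢ`. -/
def TauRel [Field k] [Ring A] [Algebra k A] [AddCommGroup C] [Module k C] [Coalgebra k C]
    (e : Entwining k A C) {m : ℕ}
    (g tg : C →ₗ[k] MultilinearMap k (fun _ : Fin (m + 1) => A) k) : Prop :=
  ∀ (c : C) (v : Fin (m + 1) → A) (t : ℕ) (α : Fin t → A) (γ : Fin t → C),
    e.ψ (c ⊗ₜ[k] v 0) = ∑ i, α i ⊗ₜ[k] γ i →
    tg c v = (-1 : k) ^ m *
      ∑ i, g (γ i) (Function.update (fun j : Fin (m + 1) => v (j + 1)) (Fin.last m) (α i))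


/-- Finite representation of a tensor indexed by `Fin t`. -/
theorem my_exists_fin_rep [Field k] [Ring A] [Algebra k A] [AddCommGroup C] [Module k C]
    (x : A ⊗[k] C) : ∃ (t : ℕ) (α : Fin t → A) (γ : Fin t → C),
    x = ∑ i, α i ⊗ₜ[k] γ i := by
  obtain ⟨S, rfl⟩ := TensorProduct.exists_finset x
  classical
  refine ⟨S.card, fun i => ((S.equivFin.symm i : A × C)).1,
    fun i => ((S.equivFin.symm i : A × C)).2, ?_⟩
  rw [← Finset.sum_attach S (fun p => p.1 ⊗ₜ[k] p.2)]
  exact (Equiv.sum_comp S.equivFin.symm (fun p => (p : A × C).1 ⊗ₜ[k] (p : A × C).2)).symm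

/-- Rotation-gluing of arguments. -/
def myRot {A : Type} [Ring A] {n : ℕ} (j : ℕ) (v : Fin (n + 1) → A) (b : Fin j → A)
    (t : Fin (n + 1)) : A :=
  if h : (t : ℕ) + j < n + 1 then v ⟨(t : ℕ) + j, h⟩
  else if h2 : (t : ℕ) + j - (n + 1) < j then b ⟨(t : ℕ) + j - (n + 1), h2⟩ else 0

theorem myRot_zero {A : Type} [Ring A] {n : ℕ} (v : Fin (n + 1) → A) (b : Fin 0 → A) :
    myRot 0 v b = v := by
  funext t
  have h : (t : ℕ) + 0 < n + 1 := by omega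
  simp only [myRot, dif_pos h]
  exact congrArg v (Fin.ext (by simp))

theorem myRot_last {A : Type} [Ring A] {n : ℕ} (v : Fin (n + 1) → A) (b : Fin (n + 1) → A) :
    myRot (n + 1) v b = b := by
  funext t
  have h : ¬ ((t : ℕ) + (n + 1) < n + 1) := by omega
  have h2 : (t : ℕ) + (n + 1) - (n + 1) < n + 1 := by omega
  simp only [myRot, dif_neg h, dif_pos h2]
  exact congrArg b (Fin.ext (by simp))

theorem myRot_succ {A : Type} [Ring A] {n j : ℕ} (hj : j ≤ n) (v : Fin (n + 1) → A)
    (a : A) (b : Fin j → A) :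
    myRot j (Function.update (fun t : Fin (n + 1) => v (t + 1)) (Fin.last n) a) b
      = myRot (j + 1) v (Fin.cons a b) := by
  funext t
  rcases lt_trichotomy ((t : ℕ) + j) n with h1 | h1 | h1
  · have hL : (t : ℕ) + j < n + 1 := by omega
    have hR : (t : ℕ) + (j + 1) < n + 1 := by omega
    simp only [myRot, dif_pos hL, dif_pos hR]
    have hne : (⟨(t : ℕ) + j, hL⟩ : Fin (n + 1)) ≠ Fin.last n := by
      simp [Fin.ext_iff]; omega
    rw [Function.update_of_ne hne]
    congr 1
    ext
    simp [Fin.add_def, Nat.mod_eq_of_lt (show (t : ℕ) + j + 1 < n + 1 by omega)]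
    omega
  · have hL : (t : ℕ) + j < n + 1 := by omega
    have hR : ¬ ((t : ℕ) + (j + 1) < n + 1) := by omega
    have hR2 : (t : ℕ) + (j + 1) - (n + 1) < j + 1 := by omega
    simp only [myRot, dif_pos hL, dif_neg hR, dif_pos hR2]
    have heq : (⟨(t : ℕ) + j, hL⟩ : Fin (n + 1)) = Fin.last n := by
      simp [Fin.ext_iff]; omega
    rw [heq, Function.update_self]
    have h0 : (⟨(t : ℕ) + (j + 1) - (n + 1), hR2⟩ : Fin (j + 1)) = 0 := by
      simp [Fin.ext_iff]; omega
    rw [h0, Fin.cons_zero]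
  · have hL : ¬ ((t : ℕ) + j < n + 1) := by omega
    have hL2 : (t : ℕ) + j - (n + 1) < j := by omega
    have hR : ¬ ((t : ℕ) + (j + 1) < n + 1) := by omega
    have hR2 : (t : ℕ) + (j + 1) - (n + 1) < j + 1 := by omega
    simp only [myRot, dif_neg hL, dif_pos hL2, dif_neg hR, dif_pos hR2]
    have hs : (⟨(t : ℕ) + (j + 1) - (n + 1), hR2⟩ : Fin (j + 1))
        = Fin.succ ⟨(t : ℕ) + j - (n + 1), hL2⟩ := by
      simp [Fin.ext_iff]; omega
    rw [hs, Fin.cons_succ]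

/-- Sum over a sigma type with an arbitrary `Fintype` instance. -/
theorem my_sum_sigma {ι : Type} [Fintype ι] {κ : ι → Type} [hk : ∀ i, Fintype (κ i)]
    [inst : Fintype ((i : ι) × κ i)] {M : Type} [AddCommMonoid M]
    (f : (i : ι) × κ i → M) :
    ∑ p, f p = ∑ i, ∑ s, f ⟨i, s⟩ := by
  rw [Subsingleton.elim inst Sigma.instFintype]
  rw [← Finset.univ_sigma_univ, Finset.sum_sigma]

theorem my_exists_iterRep [Field k] [Ring A] [Algebra k A] [AddCommGroup C] [Module k C]
    [Coalgebra k C] (e : Entwining k A C) :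
    ∀ (m : ℕ) (c : C) (v : Fin m → A),
      ∃ (ι : Type) (_ : Fintype ι) (γ : ι → C) (β : ι → Fin m → A),
        IterRep e m c v ι γ β := by
  intro m
  induction m with
  | zero =>
    intro c v
    refine ⟨PUnit, inferInstance, fun _ => c, fun _ => Fin.elim0, ?_⟩
    have hv : v = Fin.elim0 := funext fun i => i.elim0
    rw [hv]
    exact IterRep.zero c
  | succ m ih =>
    intro c v
    obtain ⟨t, α, γ₀, hrep⟩ := my_exists_fin_rep (e.ψ (c ⊗ₜ[k] v 0))
    have H : ∀ i : Fin t, ∃ (ι : Type) (_ : Fintype ι) (γ : ι → C) (β : ι → Fin m → A),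
        IterRep e m (γ₀ i) (fun j => v j.succ) ι γ β :=
      fun i => ih (γ₀ i) (fun j => v j.succ)
    let κ : Fin t → Type := fun i => (H i).choose
    haveI instκ : ∀ i, Fintype (κ i) := fun i => (H i).choose_spec.choose
    let γ : (i : Fin t) → κ i → C := fun i => (H i).choose_spec.choose_spec.choose
    let β : (i : Fin t) → κ i → Fin m → A :=
      fun i => (H i).choose_spec.choose_spec.choose_spec.choose
    have hs : ∀ i, IterRep e m (γ₀ i) (fun j => v j.succ) (κ i) (γ i) (β i) :=
      fun i => (H i).choose_spec.choose_spec.choose_spec.choose_spec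
    exact ⟨(i : Fin t) × κ i, inferInstance, _, _,
      IterRep.succ c v (Fin t) α γ₀ hrep κ γ β hs⟩

theorem my_tau_pow [Field k] [Ring A] [Algebra k A] [AddCommGroup C] [Module k C]
    [Coalgebra k C] (e : Entwining k A C) (n : ℕ)
    (F : Fin (n + 2) → (C →ₗ[k] MultilinearMap k (fun _ : Fin (n + 1) => A) k))
    (hτ : ∀ j : Fin (n + 1), TauRel e (F j.castSucc) (F j.succ)) :
    ∀ (j : ℕ) (hj : j ≤ n + 1) (c : C) (v : Fin (n + 1) → A) (ι : Type) [Fintype ι]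
      (γ : ι → C) (β : ι → Fin j → A),
      IterRep e j c (fun i => v (Fin.castLE hj i)) ι γ β →
      F ⟨j, Nat.lt_succ_of_le hj⟩ c v
        = (-1 : k) ^ (n * j) * ∑ s, F 0 (γ s) (myRot j v (β s)) := by
  intro j
  induction j with
  | zero =>
    intro hj c v ι instι γ β h
    have hw : (fun i : Fin 0 => v (Fin.castLE hj i)) = Fin.elim0 := funext fun i => i.elim0
    rw [hw] at h
    cases h
    have h0 : (⟨0, Nat.lt_succ_of_le hj⟩ : Fin (n + 2)) = 0 := Fin.ext (by simp)
    rw [h0, Nat.mul_zero, pow_zero, one_mul]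
    simp only [myRot_zero]
    exact (Fintype.sum_unique fun _ : PUnit => F 0 c v).symm
  | succ j ih =>
    intro hj c v ι instι γ β h
    have hjn : j < n + 1 := hj
    have hjle : j ≤ n + 1 := le_of_lt hjn
    generalize hw : (fun i : Fin (j + 1) => v (Fin.castLE hj i)) = w at h
    cases h
    rename_i ι₀ inst₀ α γ₀ κ γ' β' hs hrep
    subst hw
    haveI instκ : ∀ i, Fintype (κ i) :=
      fun i => Fintype.ofInjective (Sigma.mk i) sigma_mk_injective
    have h0 : e.ψ (c ⊗ₜ[k] v 0) = ∑ i, α i ⊗ₜ[k] γ₀ i := by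
      have hz : Fin.castLE hj (0 : Fin (j + 1)) = (0 : Fin (n + 1)) := rfl
      simpa [hz] using hrep
    set E := Fintype.equivFin ι₀ with hE
    have hrep' : e.ψ (c ⊗ₜ[k] v 0) = ∑ i : Fin (Fintype.card ι₀),
        α (E.symm i) ⊗ₜ[k] γ₀ (E.symm i) := by
      rw [h0]
      exact (Equiv.sum_comp E.symm fun i => α i ⊗ₜ[k] γ₀ i).symm
    have htau := hτ ⟨j, hjn⟩ c v (Fintype.card ι₀) (fun i => α (E.symm i))
      (fun i => γ₀ (E.symm i)) hrep'
    have hstep : ∀ i : ι₀,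
        F (Fin.castSucc ⟨j, hjn⟩) (γ₀ i)
            (Function.update (fun t : Fin (n + 1) => v (t + 1)) (Fin.last n) (α i))
          = (-1 : k) ^ (n * j) * ∑ s, F 0 (γ' i s)
              (myRot j (Function.update (fun t : Fin (n + 1) => v (t + 1))
                (Fin.last n) (α i)) (β' i s)) := by
      intro i
      refine ih hjle (γ₀ i)
        (Function.update (fun t : Fin (n + 1) => v (t + 1)) (Fin.last n) (α i))
        (κ i) (γ' i) (β' i) ?_
      have hveq : (fun s : Fin j => (Function.update (fun t : Fin (n + 1) => v (t + 1))
          (Fin.last n) (α i)) (Fin.castLE hjle s))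
          = fun s : Fin j => (fun i' : Fin (j + 1) => v (Fin.castLE hj i')) s.succ := by
        funext s
        have hne : Fin.castLE hjle s ≠ Fin.last n := by
          intro heq
          have hv := congrArg Fin.val heq
          simp only [Fin.coe_castLE, Fin.val_last] at hv
          omega
        rw [Function.update_of_ne hne]
        congr 1
        ext
        simp [Fin.add_def, Nat.mod_eq_of_lt (show (s : ℕ) + 1 < n + 1 by omega)]
      rw [hveq]
      exact hs i
    show F (Fin.succ ⟨j, hjn⟩) c v = _
    rw [htau]
    have h2 : (∑ i : Fin (Fintype.card ι₀), F (Fin.castSucc ⟨j, hjn⟩) (γ₀ (E.symm i))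
        (Function.update (fun t : Fin (n + 1) => v (t + 1)) (Fin.last n) (α (E.symm i))))
        = ∑ i : ι₀, ((-1 : k) ^ (n * j) * ∑ s : κ i, F 0 (γ' i s)
            (myRot (j + 1) v (Fin.cons (α i) (β' i s)))) := by
      rw [Equiv.sum_comp E.symm (fun i : ι₀ => F (Fin.castSucc ⟨j, hjn⟩) (γ₀ i)
        (Function.update (fun t : Fin (n + 1) => v (t + 1)) (Fin.last n) (α i)))]
      refine Finset.sum_congr rfl fun i _ => ?_
      rw [hstep i]
      congr 1
      refine Finset.sum_congr rfl fun s _ => ?_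
      rw [myRot_succ (show j ≤ n by omega)]
    rw [h2, ← Finset.mul_sum,
      ← my_sum_sigma (hk := instκ) (inst := instι)
        (f := fun p : (i : ι₀) × κ i => F 0 (γ' p.1 p.2)
          (myRot (j + 1) v (Fin.cons (α p.1) (β' p.1 p.2)))),
      ← mul_assoc, ← pow_add]
    have hexp : n + n * j = n * (j + 1) := by ring
    rw [hexp]

/-- On the invariant subspace `ℐⁿ(A,C,ψ)`, the cyclic operator `τ_n`
satisfies `τ_n^{n+1} = id`: if `F 0 ∈ ℐⁿ` and `F (j+1) = τ_n (F j)` for all `j`, then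
`F (n+1) = F 0`. -/
theorem cyclic_operator_order
    [Field k] [Ring A] [Algebra k A] [AddCommGroup C] [Module k C] [Coalgebra k C]
    (e : Entwining k A C) (n : ℕ)
    (F : Fin (n + 2) → (C →ₗ[k] MultilinearMap k (fun _ : Fin (n + 1) => A) k))
    (hF0 : EntwInvariant e (F 0))
    (hτ : ∀ j : Fin (n + 1), TauRel e (F j.castSucc) (F j.succ)) :
    ∀ (c : C) (v : Fin (n + 1) → A), F (Fin.last (n + 1)) c v = F 0 c v := by
  intro c v
  obtain ⟨ι, instι, γ, β, h⟩ := my_exists_iterRep e (n + 1) c v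
  haveI := instι
  have hv : (fun i : Fin (n + 1) => v (Fin.castLE (le_refl (n + 1)) i)) = v := by
    funext i
    rfl
  have hmain := my_tau_pow e n F hτ (n + 1) (le_refl (n + 1)) c v ι γ β (by rw [hv]; exact h)
  have hlast : Fin.last (n + 1) = (⟨n + 1, Nat.lt_succ_of_le (le_refl (n + 1))⟩ : Fin (n + 2)) :=
    rfl
  rw [hlast, hmain]
  have hsign : ((-1 : k)) ^ (n * (n + 1)) = 1 := Even.neg_one_pow (Nat.even_mul_succ_self n)
  rw [hsign, one_mul, hF0 c v ι γ β h]
  exact Finset.sum_congr rfl fun s _ => by rw [myRot_last]
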